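/- Let C be an additive category. Let R be the ideal of Mor(C) where R(f,f') consists of those morphisms (a,b) from f : X --> Y to f' : X' --> Y' for which there exists p : Y --> X' with f'p = b, and let R' be the ideal where R'(f,f') consists of those (a,b) for which there exists p : Y --> X' with pf = a. Then Mor(C)/R is equivalent to mod-C (via f ↦ Coker C(-,f)), and Mor(C)/R' is equivalent to (mod-C^op)^op (via f ↦ Coker C(f,-)). -/

import Mathlib

/-!
The functor `f ↦ Coker C(-, f)` from `Mor(C)` to `mod-C` is full and essentially surjective, and
two morphisms of arrows have the same image exactly when their difference lies in `R`; so it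
induces an equivalence `Mor(C)/R ≌ mod-C`. Both facts are the Yoneda lemma: a map from `C(-, Z)`
to `Coker C(-, f)` is an element of `Coker C(Z, f)`, i.e. a morphism `Z ⟶ Y` modulo those
factoring through `f`. The second equivalence is the first one for `Cᵒᵖ`, in which `R` becomes `R'`.
-/

open CategoryTheory CategoryTheory.Limits Opposite ZeroObject CategoryTheory.Pretriangulated

universe w v u

namespace Paper

section FP

variable (C : Type u) [Category.{v} C] [Preadditive C]

/-- A contravariant additive-group-valued functor is finitely presented if it is a cokernel
of a morphism between representable functors. -/
def IsFP (F : Cᵒᵖ ⥤ AddCommGrpCat.{v}) : Prop :=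
  ∃ (X Y : C) (f : X ⟶ Y), Nonempty (F ≅ cokernel (preadditiveYoneda.map f))

/-- The category `mod-C` of finitely presented contravariant functors. -/
abbrev ModCat := ObjectProperty.FullSubcategory (IsFP C)

/-- A covariant functor is finitely presented if it is a cokernel of a morphism
between corepresentable functors. -/
def IsFPCo (F : C ⥤ AddCommGrpCat.{v}) : Prop :=
  ∃ (X Y : C) (f : X ⟶ Y), Nonempty (F ≅ cokernel (preadditiveCoyoneda.map f.op))

/-- The category `mod-Cᵒᵖ` of finitely presented covariant functors. -/
abbrev CoModCat := ObjectProperty.FullSubcategory (IsFPCo C)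

end FP


/-- the ideal `R` of `Mor(C)`: a morphism `(a, b) : f ⟶ f'` lies in `R` iff there is
`p : Y ⟶ X'` with `f' ∘ p = b`. As a hom relation: `φ ∼ ψ` iff `φ - ψ ∈ R`. -/
def RRel (C : Type u) [Category.{v} C] [Preadditive C] : HomRel (Arrow C) :=
  fun {A B} φ ψ => ∃ p : A.right ⟶ B.left, p ≫ B.hom = φ.right - ψ.right

/-- the ideal `R'` of `Mor(C)`: a morphism `(a, b) : f ⟶ f'` lies in `R'` iff there is
`p : Y ⟶ X'` with `p ∘ f = a`. -/
def R'Rel (C : Type u) [Category.{v} C] [Preadditive C] : HomRel (Arrow C) :=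
  fun {A B} φ ψ => ∃ p : A.right ⟶ B.left, A.hom ≫ p = φ.left - ψ.left

theorem exists_quotient_equivalence {A B : Type*} [Category A] [Category B] (F : A ⥤ B)
    [F.Full] [F.EssSurj] {r : HomRel A}
    (hr : ∀ {a b : A} (φ ψ : a ⟶ b), F.map φ = F.map ψ ↔ r φ ψ) :
    ∃ e : Quotient r ≌ B, ∀ a, e.functor.obj ((Quotient.functor r).obj a) = F.obj a := by
  obtain rfl : F.homRel = r := by
    funext a b φ ψ
    exact propext (hr φ ψ)
  exact ⟨(CategoryTheory.Quotient.lift F.homRel F fun _ _ _ _ h => h).asEquivalence,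
    fun _ => rfl⟩

section Cokernel

variable {C D : Type*} [Category C] [Category D] [Preadditive D] [HasCokernels D]

/-- `Hom(Y Z, coker (Y f))` is the cokernel of `f ∘ - : Hom(Z, X) → Hom(Z, X')`, with quotient map
`h ↦ Y h ≫ π`: for `Y` the Yoneda embedding this is the Yoneda lemma. -/
structure _root_.CategoryTheory.Functor.RepresentsCokernels (Y : C ⥤ D) : Prop where
  exists_map_comp_π {X X' Z : C} (f : X ⟶ X') (g : Y.obj Z ⟶ cokernel (Y.map f)) :
    ∃ h : Z ⟶ X', Y.map h ≫ cokernel.π (Y.map f) = g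
  exists_comp_eq {X X' Z : C} (f : X ⟶ X') (h : Z ⟶ X')
    (hh : Y.map h ≫ cokernel.π (Y.map f) = 0) : ∃ p : Z ⟶ X, p ≫ f = h

variable {Y : C ⥤ D}

lemma π_mapArrow_comp_coker_map {a b : Arrow C} (φ : a ⟶ b) :
    cokernel.π (Y.map a.hom) ≫ (Y.mapArrow ⋙ coker D).map φ =
      Y.map φ.right ≫ cokernel.π (Y.map b.hom) :=
  cokernel.π_desc _ _ _

lemma mapArrow_comp_coker_map_eq_iff [Preadditive C] [Y.Additive] (hY : Y.RepresentsCokernels)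
    {a b : Arrow C} (φ ψ : a ⟶ b) :
    (Y.mapArrow ⋙ coker D).map φ = (Y.mapArrow ⋙ coker D).map ψ ↔ RRel C φ ψ := by
  have key : (Y.mapArrow ⋙ coker D).map φ = (Y.mapArrow ⋙ coker D).map ψ ↔
      Y.map (φ.right - ψ.right) ≫ cokernel.π (Y.map b.hom) = 0 := by
    rw [Y.map_sub, Preadditive.sub_comp, sub_eq_zero, ← π_mapArrow_comp_coker_map,
      ← π_mapArrow_comp_coker_map]
    exact (cancel_epi (cokernel.π (Y.map a.hom))).symm
  refine key.trans ⟨?_, ?_⟩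
  · exact hY.exists_comp_eq b.hom _
  · rintro ⟨p, hp⟩
    simp [← hp]

lemma full_mapArrow_comp_coker (hY : Y.RepresentsCokernels) : (Y.mapArrow ⋙ coker D).Full where
  map_surjective {a b} t := by
    change cokernel (Y.map a.hom) ⟶ cokernel (Y.map b.hom) at t
    obtain ⟨h, hh⟩ := hY.exists_map_comp_π b.hom (cokernel.π (Y.map a.hom) ≫ t)
    obtain ⟨ℓ, hℓ⟩ := hY.exists_comp_eq b.hom (a.hom ≫ h) (by
      rw [Y.map_comp, Category.assoc, hh, cokernel.condition_assoc, zero_comp])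
    refine ⟨Arrow.homMk ℓ h hℓ, (cancel_epi (cokernel.π (Y.map a.hom))).1 ?_⟩
    rw [π_mapArrow_comp_coker_map]
    exact hh

lemma full_lift_mapArrow_comp_coker (hY : Y.RepresentsCokernels) {P : ObjectProperty D}
    (hF : ∀ a, P ((Y.mapArrow ⋙ coker D).obj a)) : (P.lift (Y.mapArrow ⋙ coker D) hF).Full :=
  have := full_mapArrow_comp_coker hY
  inferInstance

lemma essSurj_lift_mapArrow_comp_coker {P : ObjectProperty D}
    (hP : ∀ F, P F → ∃ (X X' : C) (f : X ⟶ X'), Nonempty (F ≅ cokernel (Y.map f)))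
    (hF : ∀ a, P ((Y.mapArrow ⋙ coker D).obj a)) :
    (P.lift (Y.mapArrow ⋙ coker D) hF).EssSurj where
  mem_essImage F := by
    obtain ⟨X, X', f, ⟨e⟩⟩ := hP F.obj F.property
    exact ⟨Arrow.mk f, ⟨P.ι.preimageIso e.symm⟩⟩

end Cokernel

section FunctorCategory

variable {J : Type*} [Category J] {F G : J ⥤ AddCommGrpCat.{w}} (g : F ⟶ G)

lemma cokernel_π_app_surjective (j : J) : Function.Surjective ((cokernel.π g).app j) :=
  (AddCommGrpCat.epi_iff_surjective _).mp inferInstance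

lemma exists_app_eq_of_cokernel_π_app_eq_zero {j : J} {x : G.obj j}
    (hx : (cokernel.π g).app j x = 0) : ∃ y, g.app j y = x :=
  (ShortComplex.ab_exact_iff _).mp
    (((ShortComplex.mk g _ (cokernel.condition g)).exact_of_g_is_cokernel
      (cokernelIsCokernel g)).map ((evaluation J _).obj j)) x hx

end FunctorCategory

section Representable

variable {C : Type u} [Category.{v} C] [Preadditive C]

instance : (preadditiveYoneda : C ⥤ Cᵒᵖ ⥤ AddCommGrpCat).Additive where
  map_add {_ _ f g} := by ext Z x; exact Preadditive.comp_add _ _ _ x f g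
instance : (preadditiveCoyoneda : Cᵒᵖ ⥤ C ⥤ AddCommGrpCat).Additive where
  map_add {_ _ f g} := by ext Z x; exact Preadditive.add_comp _ _ _ f.unop g.unop x

lemma preadditiveYoneda_hom_ext {X : C} {G : Cᵒᵖ ⥤ AddCommGrpCat.{v}}
    {s t : preadditiveYoneda.obj X ⟶ G} (h : s.app (op X) (𝟙 X) = t.app (op X) (𝟙 X)) :
    s = t := by
  ext Z (g : Z.unop ⟶ X)
  have hs : s.app Z (g ≫ 𝟙 X) = G.map g.op (s.app (op X) (𝟙 X)) :=
    NatTrans.naturality_apply s g.op (𝟙 X)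
  have ht : t.app Z (g ≫ 𝟙 X) = G.map g.op (t.app (op X) (𝟙 X)) :=
    NatTrans.naturality_apply t g.op (𝟙 X)
  rw [Category.comp_id] at hs ht
  rw [hs, ht, h]

lemma preadditiveCoyoneda_hom_ext {X : C} {G : C ⥤ AddCommGrpCat.{v}}
    {s t : preadditiveCoyoneda.obj (op X) ⟶ G} (h : s.app X (𝟙 X) = t.app X (𝟙 X)) :
    s = t := by
  ext Z (g : X ⟶ Z)
  have hs : s.app Z (𝟙 X ≫ g) = G.map g (s.app X (𝟙 X)) := NatTrans.naturality_apply s g (𝟙 X)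
  have ht : t.app Z (𝟙 X ≫ g) = G.map g (t.app X (𝟙 X)) := NatTrans.naturality_apply t g (𝟙 X)
  rw [Category.id_comp] at hs ht
  rw [hs, ht, h]

lemma preadditiveYoneda_representsCokernels :
    (preadditiveYoneda : C ⥤ Cᵒᵖ ⥤ AddCommGrpCat.{v}).RepresentsCokernels where
  exists_map_comp_π {X X' Z} f g := by
    obtain ⟨h, hh⟩ :=
      cokernel_π_app_surjective (preadditiveYoneda.map f) (op Z) (g.app (op Z) (𝟙 Z))
    refine ⟨h, preadditiveYoneda_hom_ext ?_⟩
    exact (congrArg (fun x => (cokernel.π (preadditiveYoneda.map f)).app (op Z) x)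
      (Category.id_comp (h : Z ⟶ X'))).trans hh
  exists_comp_eq {X X' Z} f h hh := by
    have h0 : (cokernel.π (preadditiveYoneda.map f)).app (op Z) (𝟙 Z ≫ h) = 0 :=
      congr(($hh).app (op Z) (𝟙 Z))
    rw [Category.id_comp] at h0
    exact exists_app_eq_of_cokernel_π_app_eq_zero _ h0

lemma preadditiveCoyoneda_representsCokernels :
    (preadditiveCoyoneda : Cᵒᵖ ⥤ C ⥤ AddCommGrpCat.{v}).RepresentsCokernels where
  exists_map_comp_π {X X' Z} f g := by
    obtain ⟨h, hh⟩ :=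
      cokernel_π_app_surjective (preadditiveCoyoneda.map f) Z.unop (g.app Z.unop (𝟙 Z.unop))
    refine ⟨(h : X'.unop ⟶ Z.unop).op, preadditiveCoyoneda_hom_ext ?_⟩
    exact (congrArg (fun x => (cokernel.π (preadditiveCoyoneda.map f)).app Z.unop x)
      (Category.comp_id (h : X'.unop ⟶ Z.unop))).trans hh
  exists_comp_eq {X X' Z} f h hh := by
    have h0 : (cokernel.π (preadditiveCoyoneda.map f)).app Z.unop (h.unop ≫ 𝟙 Z.unop) = 0 :=
      congr(($hh).app Z.unop (𝟙 Z.unop))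
    rw [Category.comp_id] at h0
    obtain ⟨p, hp⟩ := exists_app_eq_of_cokernel_π_app_eq_zero _ h0
    exact ⟨p.op, Quiver.Hom.unop_inj hp⟩

end Representable

def arrowOpEquiv (C : Type u) [Category.{v} C] : Arrow C ≌ (Arrow Cᵒᵖ)ᵒᵖ :=
  Comma.opEquiv (𝟭 C) (𝟭 C)

lemma rRel_op_iff {C : Type u} [Category.{v} C] [Preadditive C] {a b : Arrow C} (φ ψ : a ⟶ b) :
    RRel Cᵒᵖ ((arrowOpEquiv C).functor.map φ).unop
      ((arrowOpEquiv C).functor.map ψ).unop ↔ R'Rel C φ ψ := by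
  change (∃ p : op b.left ⟶ op a.right, p ≫ a.hom.op = φ.left.op - ψ.left.op) ↔ _
  constructor
  · rintro ⟨p, hp⟩
    exact ⟨p.unop, Quiver.Hom.op_inj (by rw [op_comp, Quiver.Hom.op_unop, hp, op_sub])⟩
  · rintro ⟨p, hp⟩
    exact ⟨p.op, by rw [← op_comp, hp, op_sub]⟩

section Functors

variable (C : Type u) [Category.{v} C] [Preadditive C]

noncomputable def toModCat : Arrow C ⥤ ModCat C :=
  ObjectProperty.lift (IsFP C) (preadditiveYoneda.mapArrow ⋙ coker _)
    fun a => ⟨a.left, a.right, a.hom, ⟨Iso.refl _⟩⟩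

instance : (toModCat C).Full :=
  full_lift_mapArrow_comp_coker preadditiveYoneda_representsCokernels _

instance : (toModCat C).EssSurj :=
  essSurj_lift_mapArrow_comp_coker (fun _ h => h) _

lemma toModCat_map_eq_iff {a b : Arrow C} (φ ψ : a ⟶ b) :
    (toModCat C).map φ = (toModCat C).map ψ ↔ RRel C φ ψ :=
  ObjectProperty.hom_ext_iff.trans
    (mapArrow_comp_coker_map_eq_iff preadditiveYoneda_representsCokernels φ ψ)

noncomputable def toCoModCatOp : Arrow C ⥤ (CoModCat C)ᵒᵖ :=
  (arrowOpEquiv C).functor ⋙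
    (ObjectProperty.lift (IsFPCo C) (preadditiveCoyoneda.mapArrow ⋙ coker _)
      fun a => ⟨a.right.unop, a.left.unop, a.hom.unop, ⟨Iso.refl _⟩⟩).op

instance : (toCoModCatOp C).Full :=
  have := full_lift_mapArrow_comp_coker (preadditiveCoyoneda_representsCokernels (C := C))
    (P := IsFPCo C) fun a => ⟨a.right.unop, a.left.unop, a.hom.unop, ⟨Iso.refl _⟩⟩
  Functor.Full.comp _ _

instance : (toCoModCatOp C).EssSurj :=
  have := essSurj_lift_mapArrow_comp_coker (P := IsFPCo C)
    (fun _ ⟨X, Y, f, e⟩ => ⟨op Y, op X, f.op, e⟩)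
    fun a => ⟨a.right.unop, a.left.unop, a.hom.unop, ⟨Iso.refl _⟩⟩
  Functor.essSurj_comp _ _

lemma toCoModCatOp_map_eq_iff {a b : Arrow C} (φ ψ : a ⟶ b) :
    (toCoModCatOp C).map φ = (toCoModCatOp C).map ψ ↔ R'Rel C φ ψ :=
  Quiver.Hom.op_inj.eq_iff.trans <| ObjectProperty.hom_ext_iff.trans <|
    (mapArrow_comp_coker_map_eq_iff preadditiveCoyoneda_representsCokernels _ _).trans
      (rRel_op_iff φ ψ)

end Functors

/-- `Mor(C)/R ≃ mod-C` via `f ↦ Coker C(-, f)`, and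
`Mor(C)/R' ≃ (mod-Cᵒᵖ)ᵒᵖ` via `f ↦ Coker C(f, -)`. -/
theorem statement2 (C : Type u) [Category.{v} C] [Preadditive C] :
    (∃ e : CategoryTheory.Quotient (RRel C) ≌ ModCat C,
       ∀ a : Arrow C,
         Nonempty ((e.functor.obj ((Quotient.functor (RRel C)).obj a)).obj ≅
           cokernel (preadditiveYoneda.map a.hom))) ∧
    (∃ e : CategoryTheory.Quotient (R'Rel C) ≌ (CoModCat C)ᵒᵖ,
       ∀ a : Arrow C,
         Nonempty (((e.functor.obj ((Quotient.functor (R'Rel C)).obj a)).unop).obj ≅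
           cokernel (preadditiveCoyoneda.map a.hom.op))) := by
  obtain ⟨e, he⟩ := exists_quotient_equivalence (toModCat C) (toModCat_map_eq_iff C)
  obtain ⟨e', he'⟩ := exists_quotient_equivalence (toCoModCatOp C) (toCoModCatOp_map_eq_iff C)
  exact ⟨⟨e, fun a => ⟨eqToIso (congrArg (·.obj) (he a))⟩⟩,
    ⟨e', fun a => ⟨eqToIso (congrArg (·.unop.obj) (he' a))⟩⟩⟩

end Paper
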